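/- Let L > 0 and R > 0. There exists a constant M > 0, depending only on L and R, such that for all twice continuously differentiable L-periodic functions u₁, u₂ : ℝ → ℝ satisfying ∫₀^L (uⱼ(x)² + uⱼ'(x)² + uⱼ''(x)²) dx ≤ R² for j = 1,2, one has ∫₀^L (cosh(u₁(x))u₁'(x) − cosh(u₂(x))u₂'(x))² dx ≤ M² · ∫₀^L ((u₁−u₂)(x)² + (u₁'−u₂')(x)² + (u₁''−u₂'')(x)²) dx. -/

import Mathlib

open Real MeasureTheory Set

/-! On a period, `u²` falls below its mean somewhere and varies by at most
`∫ |2 u u'| ≤ ∫ (u² + u'²)`, so `u² ≤ (1/L + 1) ∫ (u² + u'²)` everywhere. Applied to `u` and `u'`,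
this bounds both by `A = √((1/L + 1) R²)` on the `H²` ball of radius `R`. Since `cosh` is
`sinh A`-Lipschitz on `[-A, A]`, writing
`cosh u₁ u₁' - cosh u₂ u₂' = cosh u₁ (u₁' - u₂') + (cosh u₁ - cosh u₂) u₂'` gives the pointwise
bound `cosh A (|u₁' - u₂'| + A |u₁ - u₂|)`; Cauchy–Schwarz and integration yield
`M = cosh A √(1 + A²)`. -/

theorem Function.Periodic.deriv {f : ℝ → ℝ} {c : ℝ} (hf : Function.Periodic f c) :
    Function.Periodic (deriv f) c := fun x => by
  rw [← deriv_comp_add_const, funext hf]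

theorem integral_mono_of_continuous {f g : ℝ → ℝ} {a b : ℝ} (hab : a ≤ b) (hf : Continuous f)
    (hg : Continuous g) (h : ∀ t, f t ≤ g t) : ∫ t in a..b, f t ≤ ∫ t in a..b, g t :=
  intervalIntegral.integral_mono_on hab (hf.intervalIntegrable a b) (hg.intervalIntegrable a b)
    fun t _ => h t

theorem abs_sub_le_integral_abs_of_hasDerivAt {g g' : ℝ → ℝ} {a b x y : ℝ}
    (hg : ∀ t, HasDerivAt g (g' t) t) (hg' : Continuous g')
    (hx : x ∈ Icc a b) (hy : y ∈ Icc a b) :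
    |g x - g y| ≤ ∫ t in a..b, |g' t| := by
  wlog hyx : y ≤ x generalizing x y
  · rw [abs_sub_comm]; exact this hy hx (le_of_not_ge hyx)
  calc |g x - g y| = |∫ t in y..x, g' t| := by
        rw [intervalIntegral.integral_eq_sub_of_hasDerivAt (fun t _ => hg t)
          (hg'.intervalIntegrable _ _)]
    _ ≤ ∫ t in y..x, |g' t| := intervalIntegral.abs_integral_le_integral_abs hyx
    _ ≤ ∫ t in a..b, |g' t| :=
        intervalIntegral.integral_mono_interval hy.1 hyx hx.2
          (Filter.Eventually.of_forall fun _ => abs_nonneg _) (hg'.abs.intervalIntegrable _ _)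

theorem exists_mul_le_integral {f : ℝ → ℝ} {a b : ℝ} (hab : a ≤ b) (hf : Continuous f) :
    ∃ y ∈ Icc a b, (b - a) * f y ≤ ∫ t in a..b, f t := by
  obtain ⟨y, hy, hmin⟩ := isCompact_Icc.exists_isMinOn (nonempty_Icc.2 hab) hf.continuousOn
  refine ⟨y, hy, ?_⟩
  simpa using intervalIntegral.integral_mono_on hab (intervalIntegrable_const (μ := volume))
    (hf.intervalIntegrable a b) fun t ht => hmin ht

theorem sq_le_of_periodic {u : ℝ → ℝ} {L : ℝ} (hL : 0 < L) (hu : ContDiff ℝ 1 u)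
    (hper : Function.Periodic u L) (x : ℝ) :
    u x ^ 2 ≤ (1 / L + 1) * ∫ t in 0..L, (u t ^ 2 + deriv u t ^ 2) := by
  obtain ⟨x', hx', hxx'⟩ := hper.exists_mem_Ico₀ hL x
  obtain ⟨y, hy, hy_min⟩ := exists_mul_le_integral (f := fun t => u t ^ 2) hL.le (by fun_prop)
  have hvar : |u x' ^ 2 - u y ^ 2| ≤ ∫ t in 0..L, |2 * u t * deriv u t| := by
    refine abs_sub_le_integral_abs_of_hasDerivAt (g := fun t => u t ^ 2) (fun t => ?_)
      (by fun_prop) (Ico_subset_Icc_self hx') hy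
    simpa [mul_comm] using (hu.differentiable one_ne_zero t).hasDerivAt.fun_pow 2
  have hprod : ∫ t in 0..L, |2 * u t * deriv u t| ≤ ∫ t in 0..L, (u t ^ 2 + deriv u t ^ 2) :=
    integral_mono_of_continuous hL.le (by fun_prop) (by fun_prop) fun t =>
      abs_le.2 ⟨by nlinarith [sq_nonneg (u t + deriv u t)], two_mul_le_add_sq _ _⟩
  have hsq : ∫ t in 0..L, u t ^ 2 ≤ ∫ t in 0..L, (u t ^ 2 + deriv u t ^ 2) :=
    integral_mono_of_continuous hL.le (by fun_prop) (by fun_prop) fun t =>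
      le_add_of_nonneg_right (sq_nonneg _)
  have hy_avg : u y ^ 2 ≤ 1 / L * ∫ t in 0..L, (u t ^ 2 + deriv u t ^ 2) := by
    rw [sub_zero] at hy_min
    rw [one_div_mul_eq_div, le_div_iff₀ hL]
    linarith
  rw [hxx']
  linarith [(abs_le.1 hvar).2]

theorem sq_le_and_deriv_sq_le_of_periodic {u : ℝ → ℝ} {L : ℝ} (hL : 0 < L)
    (hu : ContDiff ℝ 2 u) (hper : Function.Periodic u L) (x : ℝ) :
    let E := ∫ t in 0..L, (u t ^ 2 + deriv u t ^ 2 + deriv (deriv u) t ^ 2)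
    u x ^ 2 ≤ (1 / L + 1) * E ∧ deriv u x ^ 2 ≤ (1 / L + 1) * E := by
  have hu' : ContDiff ℝ 1 (deriv u) := hu.deriv' (n := 1)
  have hdd := hu'.continuous_deriv_one
  have hL' : 0 ≤ 1 / L + 1 := by positivity
  constructor
  · refine (sq_le_of_periodic hL (hu.of_le one_le_two) hper x).trans
      (mul_le_mul_of_nonneg_left ?_ hL')
    exact integral_mono_of_continuous hL.le (by fun_prop) (by fun_prop) fun t =>
      le_add_of_nonneg_right (sq_nonneg _)
  · refine (sq_le_of_periodic hL hu' hper.deriv x).trans (mul_le_mul_of_nonneg_left ?_ hL')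
    exact integral_mono_of_continuous hL.le (by fun_prop) (by fun_prop) fun t => by
      rw [add_assoc]; exact le_add_of_nonneg_left (sq_nonneg _)

theorem abs_cosh_sub_cosh_le {a b A : ℝ} (ha : |a| ≤ A) (hb : |b| ≤ A) :
    |cosh a - cosh b| ≤ sinh A * |a - b| := by
  have hderiv : ∀ t ∈ Icc (-A) A, ‖deriv cosh t‖ ≤ sinh A := fun t ht => by
    rw [Real.deriv_cosh, norm_eq_abs, abs_sinh]
    exact sinh_le_sinh.2 (abs_le.2 ht)
  simpa using (convex_Icc (-A) A).norm_image_sub_le_of_norm_deriv_le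
    (fun t _ => differentiable_cosh t) hderiv (abs_le.1 hb) (abs_le.1 ha)

theorem sq_cosh_mul_sub_cosh_mul_le {p₁ p₂ q₁ q₂ A : ℝ} (hp₁ : |p₁| ≤ A) (hp₂ : |p₂| ≤ A)
    (hq₂ : |q₂| ≤ A) :
    (cosh p₁ * q₁ - cosh p₂ * q₂) ^ 2 ≤
      cosh A ^ 2 * (1 + A ^ 2) * ((p₁ - p₂) ^ 2 + (q₁ - q₂) ^ 2) := by
  have hA : 0 ≤ A := (abs_nonneg _).trans hp₁
  have hcosh : |cosh p₁| ≤ cosh A := by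
    rw [abs_of_pos (cosh_pos _)]; exact cosh_le_cosh.2 (hp₁.trans (le_abs_self A))
  have hlip : |cosh p₁ - cosh p₂| ≤ cosh A * |p₁ - p₂| :=
    (abs_cosh_sub_cosh_le hp₁ hp₂).trans
      (mul_le_mul_of_nonneg_right (sinh_lt_cosh A).le (abs_nonneg _))
  have hsplit : |cosh p₁ * q₁ - cosh p₂ * q₂| ≤ cosh A * (|q₁ - q₂| + A * |p₁ - p₂|) :=
    calc |cosh p₁ * q₁ - cosh p₂ * q₂|
        = |cosh p₁ * (q₁ - q₂) + (cosh p₁ - cosh p₂) * q₂| := by ring_nf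
      _ ≤ |cosh p₁| * |q₁ - q₂| + |cosh p₁ - cosh p₂| * |q₂| := by
        rw [← abs_mul, ← abs_mul]; exact abs_add_le _ _
      _ ≤ cosh A * |q₁ - q₂| + cosh A * |p₁ - p₂| * A := by gcongr
      _ = cosh A * (|q₁ - q₂| + A * |p₁ - p₂|) := by ring
  have hcs :
      (|q₁ - q₂| + A * |p₁ - p₂|) ^ 2 ≤ (1 + A ^ 2) * ((p₁ - p₂) ^ 2 + (q₁ - q₂) ^ 2) := by
    rw [← sq_abs (p₁ - p₂), ← sq_abs (q₁ - q₂)]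
    nlinarith [sq_nonneg (A * |q₁ - q₂| - |p₁ - p₂|)]
  calc (cosh p₁ * q₁ - cosh p₂ * q₂) ^ 2 ≤ (cosh A * (|q₁ - q₂| + A * |p₁ - p₂|)) ^ 2 :=
        sq_le_sq' (abs_le.1 hsplit).1 (abs_le.1 hsplit).2
    _ ≤ cosh A ^ 2 * ((1 + A ^ 2) * ((p₁ - p₂) ^ 2 + (q₁ - q₂) ^ 2)) := by
        rw [mul_pow]; gcongr
    _ = _ := by ring

theorem cosh_deriv_lipschitz_on_H2_balls_general
    (L R : ℝ) (hL : 0 < L) :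
    ∃ M : ℝ, 0 < M ∧ ∀ u₁ u₂ : ℝ → ℝ,
      ContDiff ℝ 2 u₁ → ContDiff ℝ 2 u₂ →
      (∀ x, u₁ (x + L) = u₁ x) → (∀ x, u₂ (x + L) = u₂ x) →
      (∫ x in (0:ℝ)..L, ((u₁ x)^2 + (deriv u₁ x)^2 + (deriv (deriv u₁) x)^2)) ≤ R^2 →
      (∫ x in (0:ℝ)..L, ((u₂ x)^2 + (deriv u₂ x)^2 + (deriv (deriv u₂) x)^2)) ≤ R^2 →
      (∫ x in (0:ℝ)..L,
          (Real.cosh (u₁ x) * deriv u₁ x - Real.cosh (u₂ x) * deriv u₂ x)^2)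
        ≤ M^2 * ∫ x in (0:ℝ)..L,
            ((u₁ x - u₂ x)^2 + (deriv u₁ x - deriv u₂ x)^2
              + (deriv (deriv u₁) x - deriv (deriv u₂) x)^2) := by
  set A := √((1 / L + 1) * R ^ 2)
  refine ⟨cosh A * √(1 + A ^ 2), by positivity, ?_⟩
  intro u₁ u₂ hu₁ hu₂ hp₁ hp₂ hb₁ hb₂
  have hbound : ∀ u : ℝ → ℝ, ContDiff ℝ 2 u → Function.Periodic u L →
      ∫ x in (0:ℝ)..L, ((u x)^2 + (deriv u x)^2 + (deriv (deriv u) x)^2) ≤ R ^ 2 →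
      ∀ x, |u x| ≤ A ∧ |deriv u x| ≤ A := fun u hu hp hb x => by
    obtain ⟨hu_sq, hu'_sq⟩ := sq_le_and_deriv_sq_le_of_periodic hL hu hp x
    have hE := mul_le_mul_of_nonneg_left hb (by positivity : 0 ≤ 1 / L + 1)
    exact ⟨abs_le_sqrt (hu_sq.trans hE), abs_le_sqrt (hu'_sq.trans hE)⟩
  have hpointwise : ∀ x, (cosh (u₁ x) * deriv u₁ x - cosh (u₂ x) * deriv u₂ x) ^ 2 ≤
      (cosh A * √(1 + A ^ 2)) ^ 2 * ((u₁ x - u₂ x) ^ 2 + (deriv u₁ x - deriv u₂ x) ^ 2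
        + (deriv (deriv u₁) x - deriv (deriv u₂) x) ^ 2) := fun x => by
    rw [mul_pow, sq_sqrt (by positivity)]
    refine (sq_cosh_mul_sub_cosh_mul_le (hbound u₁ hu₁ hp₁ hb₁ x).1 (hbound u₂ hu₂ hp₂ hb₂ x).1
      (hbound u₂ hu₂ hp₂ hb₂ x).2).trans ?_
    exact mul_le_mul_of_nonneg_left (le_add_of_nonneg_right (sq_nonneg _)) (by positivity)
  have hu₁' := hu₁.continuous_deriv one_le_two
  have hu₂' := hu₂.continuous_deriv one_le_two
  have hu₁'' := (hu₁.deriv' (n := 1)).continuous_deriv_one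
  have hu₂'' := (hu₂.deriv' (n := 1)).continuous_deriv_one
  rw [← intervalIntegral.integral_const_mul]
  exact integral_mono_of_continuous hL.le (by fun_prop) (by fun_prop) hpointwise

/-- Local Lipschitz estimate for the nonlinearity `u ↦ ∂ₓ sinh(u) = cosh(u)·u'`
on balls of the periodic `H²` norm. -/
theorem cosh_deriv_lipschitz_on_H2_balls
    (L R : ℝ) (hL : 0 < L) (hR : 0 < R) :
    ∃ M : ℝ, 0 < M ∧ ∀ u₁ u₂ : ℝ → ℝ,
      ContDiff ℝ 2 u₁ → ContDiff ℝ 2 u₂ →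
      (∀ x, u₁ (x + L) = u₁ x) → (∀ x, u₂ (x + L) = u₂ x) →
      (∫ x in (0:ℝ)..L, ((u₁ x)^2 + (deriv u₁ x)^2 + (deriv (deriv u₁) x)^2)) ≤ R^2 →
      (∫ x in (0:ℝ)..L, ((u₂ x)^2 + (deriv u₂ x)^2 + (deriv (deriv u₂) x)^2)) ≤ R^2 →
      (∫ x in (0:ℝ)..L,
          (Real.cosh (u₁ x) * deriv u₁ x - Real.cosh (u₂ x) * deriv u₂ x)^2)
        ≤ M^2 * ∫ x in (0:ℝ)..L,
            ((u₁ x - u₂ x)^2 + (deriv u₁ x - deriv u₂ x)^2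
              + (deriv (deriv u₁) x - deriv (deriv u₂) x)^2) :=
  cosh_deriv_lipschitz_on_H2_balls_general L R hL
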